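/- arXiv:1711.08852 — 3 statements merged into one kernel-verified Lean document; each statement's English description precedes it below -/
import Mathlib

section
/- Let S be a rooted binary tree of height n with the lazy Markov chain P' (P'(i,i) ≥ 1/2, P' = (I+P)/2) and stationary distribution π(u) = α·2^{n-depth(u)}. Then the conductance Φ = min{ Σ_{i∈Y,j∉Y} π(i)P'(i,j) / π(Y) : Y ⊆ V(S), 0 < π(Y) ≤ 1/2 } satisfies Φ ≥ 1/(4(n+1)). -/
/-!
Reversibility makes the flow out of `Y` equal to the flow out of its complement, so we may
assume that the root is not in `Y` (otherwise pass to `V \ Y`, whose mass is at least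
`π(Y)` because `π(Y) ≤ 1/2`). Every node of `Y` then lies below the root `a` of its connected
component in `Y`, and the edge from `a` to its parent leaves `Y` and carries flow `π(a)/4`.
Below `a` there are at most `2^k` nodes at depth `|a| + k`, each of mass `2^{-k} π(a)`, so the
subtree of `a` has mass at most `(n + 1) π(a)`. Summing over the components gives
`π(Y) ≤ 4 (n + 1) · (flow out of Y)`.
-/

open Finset

/-- A rooted binary tree of height `n`: nodes are paths from the root,
encoded as lists of booleans (most recent step first), the root is `[]`,
the parent of a nonempty node `u` is `u.tail`, all depths are `≤ n`,
and the node set is closed under taking parents. -/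
structure BinTree (n : ℕ) where
  V : Finset (List Bool)
  root_mem : [] ∈ V
  height_le : ∀ u ∈ V, u.length ≤ n
  parent_mem : ∀ u ∈ V, u.tail ∈ V

/-- The transition kernel of the Markov chain on the nodes of a tree with
node set `V`: probability `1/2` to the parent, `1/4` to each child in `V`,
and the remaining probability as a self-loop. -/
noncomputable def kernel (V : Finset (List Bool)) (i j : List Bool) : ℝ :=
  if j = i then
    1 - ((if i = [] then 0 else (1 : ℝ) / 2)
      + ((V.filter (fun v => v ≠ [] ∧ v.tail = i)).card : ℝ) / 4)
  else if i ≠ [] ∧ j = i.tail then 1 / 2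
  else if j ≠ [] ∧ j.tail = i ∧ j ∈ V then 1 / 4
  else 0

/-- The lazy version `(I + P)/2` of the kernel. -/
noncomputable def lazyKernel (V : Finset (List Bool)) (i j : List Bool) : ℝ :=
  ((if j = i then (1 : ℝ) else 0) + kernel V i j) / 2

lemma card_le_two_pow_of_suffix {a : List Bool} {L : ℕ} {S : Finset (List Bool)}
    (hS : ∀ u ∈ S, u.length = L ∧ a <:+ u) : #S ≤ 2 ^ (L - a.length) := by
  set m := L - a.length
  have hdrop : ∀ u ∈ S, u.drop m = a := by
    intro u hu
    obtain ⟨hlen, t, rfl⟩ := hS u hu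
    have ht : t.length = m := by simp only [List.length_append] at hlen; omega
    rw [← ht, List.drop_left]
  have htake : ∀ u ∈ S, u.takeD m false = u.take m := fun u hu =>
    List.takeD_eq_take _ (by rw [(hS u hu).1]; omega)
  calc #S ≤ Fintype.card (List.Vector Bool m) := by
        refine card_le_card_of_injOn (fun u => ⟨u.takeD m false, List.takeD_length ..⟩)
          (fun _ _ => mem_coe.2 (mem_univ _)) fun u hu v hv huv => ?_
        have huv : u.take m = v.take m := by
          rw [← htake u hu, ← htake v hv]
          exact congrArg Subtype.val huv
        rw [← List.take_append_drop m u, ← List.take_append_drop m v, huv, hdrop u hu,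
          hdrop v hv]
    _ = 2 ^ m := by simp

lemma sum_two_pow_sub_length_le_of_suffix {n : ℕ} {a : List Bool} {S : Finset (List Bool)}
    (hS : ∀ u ∈ S, u.length ≤ n ∧ a <:+ u) :
    ∑ u ∈ S, 2 ^ (n - u.length) ≤ (n + 1) * 2 ^ (n - a.length) := by
  rw [← sum_fiberwise_of_maps_to (g := List.length) (t := range (n + 1))
    fun u hu => mem_range.2 (Nat.lt_succ_of_le (hS u hu).1)]
  calc _ ≤ ∑ _L ∈ range (n + 1), 2 ^ (n - a.length) := sum_le_sum fun L hL => ?_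
    _ = _ := by simp
  rw [sum_congr rfl fun u hu => by rw [(mem_filter.1 hu).2], sum_const, smul_eq_mul]
  rcases (S.filter (·.length = L)).eq_empty_or_nonempty with hF | ⟨u, hu⟩
  · simp [hF]
  have hlevel : ∀ v ∈ S.filter (·.length = L), v.length = L ∧ a <:+ v := fun v hv =>
    ⟨(mem_filter.1 hv).2, (hS v (mem_filter.1 hv).1).2⟩
  have haL : a.length ≤ L := (hlevel u hu).1 ▸ (hlevel u hu).2.length_le
  have hLn : L ≤ n := Nat.lt_succ_iff.1 (mem_range.1 hL)
  calc _ ≤ 2 ^ (L - a.length) * 2 ^ (n - L) :=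
        Nat.mul_le_mul_right _ (card_le_two_pow_of_suffix hlevel)
    _ = 2 ^ (n - a.length) := by rw [← pow_add]; congr 1; omega

/-- When `[] ∉ Y`, these are the roots of the connected components of `Y`. -/
def componentRoots (Y : Finset (List Bool)) : Finset (List Bool) :=
  Y.filter (·.tail ∉ Y)

lemma exists_mem_componentRoots_suffix {Y : Finset (List Bool)} (hroot : [] ∉ Y) :
    ∀ u ∈ Y, ∃ a ∈ componentRoots Y, a <:+ u
  | [], hu => absurd hu hroot
  | b :: t, hu => by
    by_cases ht : t ∈ Y
    · obtain ⟨a, ha, hsuf⟩ := exists_mem_componentRoots_suffix hroot t ht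
      exact ⟨a, ha, hsuf.trans (List.suffix_cons b t)⟩
    · exact ⟨b :: t, mem_filter.2 ⟨hu, ht⟩, List.suffix_refl _⟩

lemma ne_nil_of_mem_componentRoots {Y : Finset (List Bool)} {a : List Bool}
    (ha : a ∈ componentRoots Y) : a ≠ [] := by
  rintro rfl
  exact (mem_filter.1 ha).2 (mem_filter.1 ha).1

lemma lazyKernel_nonneg_of_ne (V : Finset (List Bool)) {i j : List Bool} (h : j ≠ i) :
    0 ≤ lazyKernel V i j := by
  simp only [lazyKernel, kernel, if_neg h]
  split_ifs <;> norm_num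

lemma lazyKernel_cons_tail (V : Finset (List Bool)) (b : Bool) (t : List Bool) :
    lazyKernel V (b :: t) t = 1 / 4 := by
  norm_num [lazyKernel, kernel, List.cons_ne_self b t |>.symm, List.cons_ne_nil]

lemma lazyKernel_tail_cons (V : Finset (List Bool)) {b : Bool} {t : List Bool}
    (hV : b :: t ∈ V) : lazyKernel V t (b :: t) = 1 / 8 := by
  have hlen : b :: t ≠ t.tail :=
    ne_of_apply_ne List.length (by simp only [List.length_cons, List.length_tail]; omega)
  norm_num [lazyKernel, kernel, List.cons_ne_self b t, List.cons_ne_nil, hlen, hV]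

lemma ne_nil_and_eq_tail_iff {i j : List Bool} : i ≠ [] ∧ j = i.tail ↔ ∃ b, i = b :: j := by
  cases i <;> simp [eq_comm]

lemma lazyKernel_eq_zero (V : Finset (List Bool)) {i j : List Bool} (h : j ≠ i)
    (hij : ¬∃ b, i = b :: j) (hji : ¬∃ b, j = b :: i) : lazyKernel V i j = 0 := by
  rw [← ne_nil_and_eq_tail_iff] at hij hji
  simp only [lazyKernel, kernel, if_neg h, if_neg hij]
  rw [if_neg fun h' => hji ⟨h'.1, h'.2.1.symm⟩]
  norm_num

lemma two_pow_mul_lazyKernel_comm {n : ℕ} (T : BinTree n) {i j : List Bool} (hi : i ∈ T.V)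
    (hj : j ∈ T.V) :
    (2 : ℝ) ^ (n - i.length) * lazyKernel T.V i j = 2 ^ (n - j.length) * lazyKernel T.V j i := by
  wlog hij : ∃ b, i = b :: j generalizing i j
  · by_cases hji : ∃ b, j = b :: i
    · exact (this hj hi hji).symm
    by_cases h : j = i
    · rw [h]
    rw [lazyKernel_eq_zero _ h hij hji, lazyKernel_eq_zero _ (Ne.symm h) hji hij, mul_zero,
      mul_zero]
  obtain ⟨b, rfl⟩ := hij
  have hlen : j.length + 1 ≤ n := T.height_le _ hi
  rw [lazyKernel_cons_tail, lazyKernel_tail_cons _ hi, List.length_cons,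
    show n - j.length = n - (j.length + 1) + 1 by omega, pow_succ]
  ring

lemma sum_le_mul_sum_componentRoots {n : ℕ} (T : BinTree n) {Y : Finset (List Bool)}
    (hY : Y ⊆ T.V) (hroot : [] ∉ Y) {π : List Bool → ℝ} {Z : ℝ} (hZ : 0 ≤ Z)
    (hπ : ∀ u, π u = 2 ^ (n - u.length) / Z) :
    ∑ u ∈ Y, π u ≤ (n + 1) * ∑ a ∈ componentRoots Y, π a := by
  choose! r hr hsuf using exists_mem_componentRoots_suffix hroot
  rw [← sum_fiberwise_of_maps_to hr, mul_sum]
  refine sum_le_sum fun a _ => ?_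
  have hfiber : ∑ u ∈ Y with r u = a, 2 ^ (n - u.length) ≤ (n + 1) * 2 ^ (n - a.length) :=
    sum_two_pow_sub_length_le_of_suffix fun u hu =>
      ⟨T.height_le u (hY (mem_filter.1 hu).1), (mem_filter.1 hu).2 ▸ hsuf u (mem_filter.1 hu).1⟩
  simp only [hπ, ← sum_div, ← mul_div_assoc]
  gcongr
  exact_mod_cast hfiber

lemma sum_componentRoots_le_four_mul_crossing {n : ℕ} (T : BinTree n) {Y : Finset (List Bool)}
    (hY : Y ⊆ T.V) {π : List Bool → ℝ} (hπ : ∀ u, 0 ≤ π u) :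
    ∑ a ∈ componentRoots Y, π a ≤ 4 * ∑ i ∈ Y, ∑ j ∈ T.V \ Y, π i * lazyKernel T.V i j := by
  have hterm : ∀ i ∈ Y, ∀ j ∈ T.V \ Y, 0 ≤ π i * lazyKernel T.V i j := fun i hi j hj =>
    mul_nonneg (hπ i) (lazyKernel_nonneg_of_ne _ fun h => (mem_sdiff.1 hj).2 (h ▸ hi))
  rw [mul_sum]
  calc ∑ a ∈ componentRoots Y, π a
        = ∑ a ∈ componentRoots Y, 4 * (π a * lazyKernel T.V a a.tail) :=
        sum_congr rfl fun a ha => by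
          obtain ⟨b, t, rfl⟩ := List.exists_cons_of_ne_nil (ne_nil_of_mem_componentRoots ha)
          rw [List.tail_cons, lazyKernel_cons_tail]
          ring
    _ ≤ ∑ a ∈ componentRoots Y, 4 * ∑ j ∈ T.V \ Y, π a * lazyKernel T.V a j := by
        gcongr with a ha
        obtain ⟨haY, hat⟩ := mem_filter.1 ha
        exact single_le_sum (hterm a haY) (mem_sdiff.2 ⟨T.parent_mem a (hY haY), hat⟩)
    _ ≤ ∑ i ∈ Y, 4 * ∑ j ∈ T.V \ Y, π i * lazyKernel T.V i j :=
        sum_le_sum_of_subset_of_nonneg (filter_subset _ _) fun i hi _ =>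
          mul_nonneg (by norm_num) (sum_nonneg (hterm i hi))

lemma sum_le_four_mul_succ_mul_crossing {n : ℕ} (T : BinTree n) {Y : Finset (List Bool)}
    (hY : Y ⊆ T.V) (hroot : [] ∉ Y) {π : List Bool → ℝ} {Z : ℝ} (hZ : 0 ≤ Z)
    (hπ : ∀ u, π u = 2 ^ (n - u.length) / Z) :
    ∑ u ∈ Y, π u ≤ 4 * (n + 1) * ∑ i ∈ Y, ∑ j ∈ T.V \ Y, π i * lazyKernel T.V i j := by
  have hπ0 : ∀ u, 0 ≤ π u := fun u => by rw [hπ]; positivity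
  calc ∑ u ∈ Y, π u ≤ (n + 1) * ∑ a ∈ componentRoots Y, π a :=
        sum_le_mul_sum_componentRoots T hY hroot hZ hπ
    _ ≤ (n + 1) * (4 * ∑ i ∈ Y, ∑ j ∈ T.V \ Y, π i * lazyKernel T.V i j) := by
        gcongr
        exact sum_componentRoots_le_four_mul_crossing T hY hπ0
    _ = _ := by ring

lemma crossing_comm {n : ℕ} (T : BinTree n) {π : List Bool → ℝ} {Z : ℝ}
    (hπ : ∀ u, π u = 2 ^ (n - u.length) / Z) {A B : Finset (List Bool)} (hA : A ⊆ T.V)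
    (hB : B ⊆ T.V) :
    ∑ i ∈ A, ∑ j ∈ B, π i * lazyKernel T.V i j = ∑ i ∈ B, ∑ j ∈ A, π i * lazyKernel T.V i j := by
  rw [sum_comm]
  refine sum_congr rfl fun j hj => sum_congr rfl fun i hi => ?_
  rw [hπ, hπ, div_mul_eq_mul_div, div_mul_eq_mul_div,
    two_pow_mul_lazyKernel_comm T (hA hi) (hB hj)]

/-- Conductance bound for the lazy chain: for every subset $Y$ of the nodes
with $0 < \pi(Y) \le 1/2$, the ratio of the crossing edge weight
$\sum_{i\in Y, j\notin Y}\pi(i)P'(i,j)$ to $\pi(Y)$ is at least $1/(4(n+1))$;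
hence $\Phi \ge 1/(4(n+1))$. -/
theorem stmt9 (n : ℕ) (T : BinTree n) (Y : Finset (List Bool)) (hY : Y ⊆ T.V)
    (π : List Bool → ℝ)
    (hπ : ∀ u, π u = (2 : ℝ) ^ (n - u.length) / ∑ v ∈ T.V, (2 : ℝ) ^ (n - v.length))
    (h0 : 0 < ∑ u ∈ Y, π u) (h2 : ∑ u ∈ Y, π u ≤ 1 / 2) :
    (∑ i ∈ Y, ∑ j ∈ T.V \ Y, π i * lazyKernel T.V i j) / (∑ u ∈ Y, π u)
      ≥ 1 / (4 * (n + 1)) := by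
  set Z := ∑ v ∈ T.V, (2 : ℝ) ^ (n - v.length)
  have hZ : 0 < Z := sum_pos (fun v _ => by positivity) ⟨[], T.root_mem⟩
  rw [ge_iff_le, div_le_div_iff₀ (by positivity) h0, one_mul]
  by_cases hroot : [] ∈ Y
  · have htotal : ∑ u ∈ T.V, π u = 1 := by
      simp only [hπ, ← sum_div]
      exact div_self hZ.ne'
    have hsmall : ∑ u ∈ Y, π u ≤ ∑ u ∈ T.V \ Y, π u := by
      rw [sum_sdiff_eq_sub hY, htotal]
      linarith
    calc ∑ u ∈ Y, π u ≤ ∑ u ∈ T.V \ Y, π u := hsmall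
      _ ≤ 4 * (n + 1) * ∑ i ∈ T.V \ Y, ∑ j ∈ T.V \ (T.V \ Y), π i * lazyKernel T.V i j :=
        sum_le_four_mul_succ_mul_crossing T sdiff_subset (fun h => (mem_sdiff.1 h).2 hroot)
          hZ.le hπ
      _ = _ := by
        rw [Finset.sdiff_sdiff_eq_self hY, crossing_comm T hπ sdiff_subset hY]
        ring
  · calc ∑ u ∈ Y, π u ≤ 4 * (n + 1) * ∑ i ∈ Y, ∑ j ∈ T.V \ Y, π i * lazyKernel T.V i j :=
        sum_le_four_mul_succ_mul_crossing T hY hroot hZ.le hπ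
      _ = _ := by ring
end

section
/- Let S be a nonempty rooted binary tree of height n with W_i the weighted count of the depth-i truncation (a node at depth d ≤ i contributes 2^{i-d}). Suppose for each i we have estimates Ŵ_i with |Ŵ_i − W_i| ≤ ζ·W_i where ζ = ξ/(2(n+1)) for some ξ > 0. Then the estimate |Ŝ| = Ŵ_n − Σ_{k=0}^{n-1} Ŵ_k satisfies | |Ŝ| − |V(S)| | ≤ ξ·2^n. -/
open Finset

/-!
A node at depth `d ≤ n` contributes `2^(n-d)` to `W n` and `∑_{d ≤ k < n} 2^(k-d) = 2^(n-d) - 1`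
to `∑_{k<n} W k`, so `W n - ∑_{k<n} W k` counts every node once. In particular
`∑_{k<n} W k ≤ W n`, so the errors of all `n + 1` estimates add up to at most `2 ζ W n`,
and `W n ≤ (n + 1) 2^n` because each level `d` has at most `2^d` nodes.
-/

theorem card_filter_length_eq_le {α : Type*} [Fintype α] (s : Finset (List α)) (d : ℕ) :
    #(s.filter (·.length = d)) ≤ Fintype.card α ^ d := by
  classical
  have hsub : s.filter (·.length = d) ⊆ (univ : Finset (Fin d → α)).image List.ofFn := by
    rintro l hl
    obtain rfl := (mem_filter.mp hl).2
    exact mem_image.mpr ⟨l.get, mem_univ _, List.ofFn_get l⟩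
  calc #(s.filter (·.length = d))
      ≤ #((univ : Finset (Fin d → α)).image List.ofFn) := card_le_card hsub
    _ ≤ #(univ : Finset (Fin d → α)) := card_image_le
    _ = Fintype.card α ^ d := by simp

theorem sum_range_ite_two_pow (d n : ℕ) :
    ∑ k ∈ range n, (if d ≤ k then (2 : ℝ) ^ (k - d) else 0) = 2 ^ (n - d) - 1 := by
  rw [← sum_filter, range_eq_Ico, Ico_filter_le_of_left_le (Nat.zero_le d),
    sum_Ico_eq_sum_range]
  simp only [Nat.add_sub_cancel_left]
  rw [geom_sum_eq (by norm_num : (2 : ℝ) ≠ 1)]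
  norm_num

/-- The truncation weight `W_i` of the paper. -/
noncomputable def truncWeight (V : Finset (List Bool)) (i : ℕ) : ℝ :=
  ∑ u ∈ V.filter (fun u => u.length ≤ i), (2 : ℝ) ^ (i - u.length)

section truncWeight

variable {V : Finset (List Bool)} {n : ℕ}

theorem truncWeight_sub_sum_range (hV : ∀ u ∈ V, u.length ≤ n) :
    truncWeight V n - ∑ k ∈ range n, truncWeight V k = #V := by
  simp only [truncWeight, sum_filter]
  rw [sum_comm, ← sum_sub_distrib, card_eq_sum_ones, Nat.cast_sum, Nat.cast_one]
  refine sum_congr rfl fun u hu => ?_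
  rw [if_pos (hV u hu), sum_range_ite_two_pow]
  ring

theorem sum_range_truncWeight_le (hV : ∀ u ∈ V, u.length ≤ n) :
    ∑ k ∈ range n, truncWeight V k ≤ truncWeight V n := by
  have := truncWeight_sub_sum_range hV
  have : (0 : ℝ) ≤ #V := Nat.cast_nonneg _
  linarith

theorem truncWeight_le (hV : ∀ u ∈ V, u.length ≤ n) :
    truncWeight V n ≤ (n + 1) * 2 ^ n := by
  have hmaps : ∀ u ∈ V, u.length ∈ range (n + 1) :=
    fun u hu => mem_range.mpr (Nat.lt_succ_of_le (hV u hu))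
  have hlevel : ∀ d ∈ range (n + 1),
      ∑ u ∈ V.filter (·.length = d), (2 : ℝ) ^ (n - u.length) ≤ 2 ^ n := by
    intro d hd
    rw [sum_congr rfl fun u hu => by rw [(mem_filter.mp hu).2], sum_const, nsmul_eq_mul]
    calc (#(V.filter (·.length = d)) : ℝ) * 2 ^ (n - d)
        ≤ 2 ^ d * 2 ^ (n - d) := by
          gcongr
          exact_mod_cast (card_filter_length_eq_le V d).trans_eq (by simp)
      _ = 2 ^ n := by rw [← pow_add, Nat.add_sub_cancel' (mem_range_succ_iff.mp hd)]
  calc truncWeight V n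
      = ∑ d ∈ range (n + 1), ∑ u ∈ V.filter (·.length = d), (2 : ℝ) ^ (n - u.length) := by
        rw [truncWeight, filter_true_of_mem hV, sum_fiberwise_of_maps_to hmaps]
    _ ≤ ∑ _d ∈ range (n + 1), (2 : ℝ) ^ n := sum_le_sum hlevel
    _ = (n + 1) * 2 ^ n := by simp

end truncWeight

theorem abs_sub_sum_range_sub_le {W West : ℕ → ℝ} {ζ : ℝ} {n : ℕ}
    (h : ∀ i ≤ n, |West i - W i| ≤ ζ * W i) :
    |(West n - ∑ k ∈ range n, West k) - (W n - ∑ k ∈ range n, W k)|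
      ≤ ζ * (W n + ∑ k ∈ range n, W k) := by
  calc |(West n - ∑ k ∈ range n, West k) - (W n - ∑ k ∈ range n, W k)|
      = |(West n - W n) - ∑ k ∈ range n, (West k - W k)| := by
        rw [sum_sub_distrib]; ring_nf
    _ ≤ |West n - W n| + ∑ k ∈ range n, |West k - W k| :=
        (abs_sub _ _).trans (add_le_add_right (abs_sum_le_sum_abs _ _) _)
    _ ≤ ζ * W n + ∑ k ∈ range n, ζ * W k := by
        gcongr with k hk
        · exact h n le_rfl
        · exact h k (mem_range.mp hk).le
    _ = ζ * (W n + ∑ k ∈ range n, W k) := by rw [mul_add, mul_sum]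

/-- If each truncation weight $W_i$ is estimated within relative error
$\zeta = \xi/(2(n+1))$, then the derived estimate
$\hat W_n - \sum_{k<n}\hat W_k$ approximates $|V(S)|$ within additive error
$\xi 2^n$. -/
theorem stmt12 (n : ℕ) (T : BinTree n) (ξ : ℝ) (hξ : 0 < ξ)
    (West : ℕ → ℝ)
    (hW : ∀ i ≤ n,
      |West i - ∑ u ∈ T.V.filter (fun u => u.length ≤ i), (2 : ℝ) ^ (i - u.length)|
        ≤ (ξ / (2 * (n + 1)))
            * ∑ u ∈ T.V.filter (fun u => u.length ≤ i), (2 : ℝ) ^ (i - u.length)) :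
    |(West n - ∑ k ∈ Finset.range n, West k) - (T.V.card : ℝ)| ≤ ξ * 2 ^ n := by
  have hζ : 0 ≤ ξ / (2 * (n + 1)) := by positivity
  have hsum := sum_range_truncWeight_le T.height_le
  have hWn := truncWeight_le T.height_le
  calc |(West n - ∑ k ∈ range n, West k) - (T.V.card : ℝ)|
      = |(West n - ∑ k ∈ range n, West k)
          - (truncWeight T.V n - ∑ k ∈ range n, truncWeight T.V k)| := by
        rw [truncWeight_sub_sum_range T.height_le]
    _ ≤ ξ / (2 * (n + 1)) * (truncWeight T.V n + ∑ k ∈ range n, truncWeight T.V k) :=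
        abs_sub_sum_range_sub_le hW
    _ ≤ ξ / (2 * (n + 1)) * (2 * ((n + 1) * 2 ^ n)) := by gcongr; linarith
    _ = ξ * 2 ^ n := by field_simp
end

section
/- For a nonempty rooted binary tree S of height n, Σ_{k=0}^{n-1} W_k ≤ W_n, where W_i = Σ_{u: depth(u) ≤ i} 2^{i-depth(u)}. -/
open Finset

/-! Exchanging the two sums, a node at depth `d` contributes
`∑_{k=d}^{n-1} 2^(k-d) = 2^(n-d) - 1` to the left-hand side, one less than its weight
`2^(n-d)` in `W_n`. -/

lemma sum_Ico_two_pow_sub_lt (d n : ℕ) : ∑ k ∈ Ico d n, 2 ^ (k - d) < 2 ^ (n - d) := by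
  rw [sum_Ico_eq_sum_range]
  simpa using Nat.geomSum_lt le_rfl fun k hk => mem_range.1 hk

lemma sum_range_sum_filter_two_pow_sub_le {α : Type*} (s : Finset α) (d : α → ℕ) (n : ℕ) :
    ∑ k ∈ range n, ∑ u ∈ s with d u ≤ k, 2 ^ (k - d u) ≤ ∑ u ∈ s, 2 ^ (n - d u) := by
  simp only [sum_filter]
  rw [sum_comm]
  refine sum_le_sum fun u _ => ?_
  have hIco : {k ∈ range n | d u ≤ k} = Ico (d u) n := by
    ext k; simp only [mem_filter, mem_range, mem_Ico, and_comm]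
  rw [← sum_filter, hIco]
  exact (sum_Ico_two_pow_sub_lt _ _).le

/-- For a nonempty binary tree of height $n$, $\sum_{k=0}^{n-1} W_k \le W_n$,
where $W_i$ is the weighted count of the depth-$i$ truncation.  (The depth-$n$
truncation is all of $S$.) -/
theorem stmt13 (n : ℕ) (T : BinTree n) :
    ∑ k ∈ Finset.range n,
        ∑ u ∈ T.V.filter (fun u => u.length ≤ k), 2 ^ (k - u.length)
      ≤ ∑ u ∈ T.V, 2 ^ (n - u.length) :=
  sum_range_sum_filter_two_pow_sub_le T.V List.length n
end
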